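/- arXiv:1702.04303 — 3 statements merged into one kernel-verified Lean document; each statement's English description precedes it below -/
import Mathlib

section
/- Let X ∈ ℝ^{n×p} with X^T X = I, G ∈ ℝ^{n×p}, A := G X^T − X G^T, and ∇F₁ := G − X G^T X. Then ∇F₁ = 0 if and only if A = 0. -/
/-! If `G = X Gᵀ X`, then `Xᵀ G = Gᵀ X` is symmetric, hence so is `G Xᵀ = X (Xᵀ G) Xᵀ`;
conversely `G = G Xᵀ X = X Gᵀ X` when `G Xᵀ = X Gᵀ`. -/

open Matrix

namespace Matrix

variable {R m n : Type*} [CommSemiring R] [Fintype m] [Fintype n] [DecidableEq n]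
  {X G : Matrix m n R}

theorem transpose_mul_eq_of_eq_mul_transpose_mul (hX : Xᵀ * X = 1) (h : G = X * Gᵀ * X) :
    Xᵀ * G = Gᵀ * X := by
  conv_lhs => rw [h, ← Matrix.mul_assoc, ← Matrix.mul_assoc, hX, Matrix.one_mul]

theorem mul_transpose_eq_of_eq_mul_transpose_mul (hX : Xᵀ * X = 1) (h : G = X * Gᵀ * X) :
    G * Xᵀ = X * Gᵀ := by
  have hfactor : G * Xᵀ = X * (Xᵀ * G) * Xᵀ := by
    conv_lhs => rw [h, Matrix.mul_assoc X, ← transpose_mul_eq_of_eq_mul_transpose_mul hX h]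
  calc G * Xᵀ = (G * Xᵀ)ᵀ := by
        rw [hfactor, transpose_mul, transpose_mul, transpose_mul, transpose_transpose,
          transpose_mul_eq_of_eq_mul_transpose_mul hX h, Matrix.mul_assoc]
    _ = X * Gᵀ := by rw [transpose_mul, transpose_transpose]

theorem eq_mul_transpose_mul_of_mul_transpose_eq (hX : Xᵀ * X = 1) (h : G * Xᵀ = X * Gᵀ) :
    G = X * Gᵀ * X := by
  rw [← h, Matrix.mul_assoc, hX, Matrix.mul_one]

end Matrix

theorem gradF1_eq_zero_iff_A_eq_zero {n p : ℕ}
    (X G : Matrix (Fin n) (Fin p) ℝ) (hX : Xᵀ * X = 1) :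
    G - X * Gᵀ * X = 0 ↔ G * Xᵀ - X * Gᵀ = 0 := by
  rw [sub_eq_zero, sub_eq_zero]
  exact ⟨mul_transpose_eq_of_eq_mul_transpose_mul hX, eq_mul_transpose_mul_of_mul_transpose_eq hX⟩
end

section
/- Let X ∈ ℝ^{n×p} with X^T X = I and G ∈ ℝ^{n×p}. Define H := α (G X^T − X G^T) X + β (I − X X^T) G with α > 0 and β ≥ 0, and A := G X^T − X G^T. Then Tr[G^T H] ≥ (α/2) ‖A‖_F². In particular, if A ≠ 0 then −H is a descent direction: Tr[G^T (−H)] ≤ −(α/2)‖A‖_F² < 0. -/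
/-!
With `A = G Xᵀ - X Gᵀ` and `P = 1 - X Xᵀ`, the pairing `⟨G, H⟩` splits as
`α ⟨G, A X⟩ + β ⟨G, P G⟩`. The first term equals `‖A‖² / 2` because `A` is the skew part of
`M = G Xᵀ` and `⟨G, A X⟩ = ⟨A, M⟩`. Since `XᵀX = 1`, `P` is a symmetric idempotent, so the
second term is `‖P G‖² ≥ 0`.
-/

open Matrix

noncomputable def frobNorm {n p : ℕ} (A : Matrix (Fin n) (Fin p) ℝ) : ℝ :=
  Real.sqrt (Matrix.trace (Aᵀ * A))

namespace Matrix

variable {m n R : Type*} [Fintype m] [Fintype n]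

section CommRing

variable [CommRing R]

theorem trace_transpose_mul_self_sub_transpose (M : Matrix m m R) :
    trace ((M - Mᵀ)ᵀ * (M - Mᵀ)) = 2 * trace ((M - Mᵀ) * Mᵀ) := by
  have hsq : trace (M * M) = trace (Mᵀ * Mᵀ) := by
    rw [← trace_transpose, transpose_mul]
  simp only [transpose_sub, transpose_transpose, sub_mul, mul_sub, trace_sub]
  rw [trace_mul_comm Mᵀ M, hsq]
  ring

theorem two_mul_trace_transpose_mul_skew_mul (G X : Matrix m n R) :
    2 * trace (Gᵀ * ((G * Xᵀ - X * Gᵀ) * X)) =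
      trace ((G * Xᵀ - X * Gᵀ)ᵀ * (G * Xᵀ - X * Gᵀ)) := by
  have hM : X * Gᵀ = (G * Xᵀ)ᵀ := by rw [transpose_mul, transpose_transpose]
  rw [hM, trace_transpose_mul_self_sub_transpose, trace_mul_comm, Matrix.mul_assoc, ← hM]

theorem isIdempotentElem_mul_transpose [DecidableEq n] {X : Matrix m n R}
    (hX : Xᵀ * X = 1) : IsIdempotentElem (X * Xᵀ) := by
  rw [IsIdempotentElem, Matrix.mul_assoc, ← Matrix.mul_assoc Xᵀ, hX, Matrix.one_mul]

theorem trace_transpose_mul_mul_of_isIdempotentElem {P : Matrix m m R} (hPt : Pᵀ = P)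
    (hP : IsIdempotentElem P) (G : Matrix m n R) :
    trace (Gᵀ * (P * G)) = trace ((P * G)ᵀ * (P * G)) := by
  rw [transpose_mul, hPt, Matrix.mul_assoc, ← Matrix.mul_assoc P, hP.eq]

end CommRing

theorem trace_transpose_mul_self_nonneg (M : Matrix m n ℝ) : 0 ≤ trace (Mᵀ * M) := by
  simpa only [conjTranspose_eq_transpose_of_trivial] using
    (posSemidef_conjTranspose_mul_self M).trace_nonneg

theorem trace_transpose_mul_self_pos {M : Matrix m n ℝ} (hM : M ≠ 0) : 0 < trace (Mᵀ * M) := by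
  refine (trace_transpose_mul_self_nonneg M).lt_of_ne' fun h => hM ?_
  rwa [← conjTranspose_eq_transpose_of_trivial, trace_conjTranspose_mul_self_eq_zero_iff] at h

end Matrix

theorem frobNorm_sq {n p : ℕ} (A : Matrix (Fin n) (Fin p) ℝ) :
    frobNorm A ^ 2 = trace (Aᵀ * A) :=
  Real.sq_sqrt (trace_transpose_mul_self_nonneg A)

theorem descent_direction {n p : ℕ}
    (X G : Matrix (Fin n) (Fin p) ℝ) (hX : Xᵀ * X = 1)
    (α β : ℝ) (hα : 0 < α) (hβ : 0 ≤ β)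
    (A : Matrix (Fin n) (Fin n) ℝ) (hA : A = G * Xᵀ - X * Gᵀ)
    (H : Matrix (Fin n) (Fin p) ℝ)
    (hH : H = α • (A * X) + β • ((1 - X * Xᵀ) * G)) :
    Matrix.trace (Gᵀ * H) ≥ (α / 2) * frobNorm A ^ 2 ∧
      (A ≠ 0 →
        Matrix.trace (Gᵀ * (-H)) ≤ -(α / 2) * frobNorm A ^ 2 ∧
          -(α / 2) * frobNorm A ^ 2 < 0) := by
  have hskew : 2 * trace (Gᵀ * (A * X)) = frobNorm A ^ 2 := by
    rw [frobNorm_sq, hA, two_mul_trace_transpose_mul_skew_mul]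
  have hproj : 0 ≤ trace (Gᵀ * ((1 - X * Xᵀ) * G)) := by
    have hP := (isIdempotentElem_mul_transpose hX).one_sub
    rw [trace_transpose_mul_mul_of_isIdempotentElem (by simp) hP]
    exact trace_transpose_mul_self_nonneg _
  have hsplit : trace (Gᵀ * H) =
      α * trace (Gᵀ * (A * X)) + β * trace (Gᵀ * ((1 - X * Xᵀ) * G)) := by
    simp only [hH, Matrix.mul_add, Matrix.mul_smul, trace_add, trace_smul, smul_eq_mul]
  have hbound : trace (Gᵀ * H) ≥ (α / 2) * frobNorm A ^ 2 := by
    nlinarith [mul_nonneg hβ hproj]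
  refine ⟨hbound, fun hA0 => ⟨?_, ?_⟩⟩
  · rw [Matrix.mul_neg, trace_neg]
    linarith
  · have hpos : 0 < frobNorm A ^ 2 := frobNorm_sq A ▸ trace_transpose_mul_self_pos hA0
    nlinarith
end

section
/- Let X ∈ ℝ^{n×p} have rank p with SVD X = U Σ V^T (U ∈ ℝ^{n×n}, V ∈ ℝ^{p×p} orthogonal, Σ with strictly positive diagonal singular values σ₁ ≥ ... ≥ σ_p > 0). Then Q* := U I_{n,p} V^T minimizes ‖X − Q‖_F² over all Q ∈ St(n,p), i.e., for every Q with Q^T Q = I_p, ‖X − Q*‖_F ≤ ‖X − Q‖_F. -/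
/-!
Write `X = W Σ Vᵀ` with `W = U I_{n,p}`, so that `W` has orthonormal columns. For `Q` with
orthonormal columns, `‖X - Q‖_F² = ‖X‖_F² - 2 tr(Qᵀ X) + p`, so minimizing the distance means
maximizing `tr(Qᵀ X) = tr((Q V)ᵀ W Σ) = ∑ⱼ ((Q V)ᵀ W)ⱼⱼ σⱼ`. Each `((Q V)ᵀ W)ⱼⱼ` is the inner
product of two unit vectors, hence at most `1`, so `tr(Qᵀ X) ≤ ∑ⱼ σⱼ`, with equality for `Q = W Vᵀ`.
-/

open Matrix

namespace Matrix

variable {l m n : Type*} [Fintype m]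

theorem card_le_card_of_transpose_mul_self_eq_one [Fintype n] [DecidableEq n]
    {A : Matrix m n ℝ} (hA : Aᵀ * A = 1) : Fintype.card n ≤ Fintype.card m :=
  calc Fintype.card n = (Aᵀ * A).rank := by rw [hA, rank_one]
    _ ≤ A.rank := rank_mul_le_right _ _
    _ ≤ Fintype.card m := rank_le_card_height A

theorem transpose_mul_self_mul_eq_one [Fintype n] [DecidableEq n] [DecidableEq l]
    {A : Matrix m n ℝ} {B : Matrix n l ℝ} (hA : Aᵀ * A = 1) (hB : Bᵀ * B = 1) :
    (A * B)ᵀ * (A * B) = 1 := by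
  rw [transpose_mul, Matrix.mul_assoc, ← Matrix.mul_assoc Aᵀ, hA, Matrix.one_mul, hB]

theorem transpose_mul_self_submatrix_one [DecidableEq m] [DecidableEq n] {e : n → m}
    (he : Function.Injective e) :
    ((1 : Matrix m m ℝ).submatrix id e)ᵀ * (1 : Matrix m m ℝ).submatrix id e = 1 := by
  ext i j
  simp [mul_apply, one_apply, he.eq_iff]

theorem transpose_mul_apply_le_one [DecidableEq n] [DecidableEq l]
    {A : Matrix m n ℝ} {B : Matrix m l ℝ} (hA : Aᵀ * A = 1) (hB : Bᵀ * B = 1) (i : n) (j : l) :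
    (Aᵀ * B) i j ≤ 1 := by
  have hAi : ∑ k, A k i ^ 2 = 1 := by simpa [mul_apply, sq] using congrFun (congrFun hA i) i
  have hBj : ∑ k, B k j ^ 2 = 1 := by simpa [mul_apply, sq] using congrFun (congrFun hB j) j
  calc (Aᵀ * B) i j = ∑ k, A k i * B k j := by simp [mul_apply]
    _ ≤ ∑ k, (A k i ^ 2 + B k j ^ 2) / 2 :=
        Finset.sum_le_sum fun k _ => by nlinarith [sq_nonneg (A k i - B k j)]
    _ = 1 := by rw [← Finset.sum_div, Finset.sum_add_distrib, hAi, hBj]; norm_num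

theorem trace_mul_diagonal_le_sum [DecidableEq m] {M : Matrix m m ℝ} (hM : ∀ i, M i i ≤ 1)
    {σ : m → ℝ} (hσ : ∀ i, 0 ≤ σ i) : trace (M * diagonal σ) ≤ ∑ i, σ i :=
  Finset.sum_le_sum fun i _ => by
    simpa [mul_diagonal] using mul_le_of_le_one_left (hσ i) (hM i)

theorem trace_sub_transpose_mul_sub [Fintype n] [DecidableEq n] {X B : Matrix m n ℝ}
    (hB : Bᵀ * B = 1) :
    trace ((X - B)ᵀ * (X - B)) = trace (Xᵀ * X) - 2 * trace (Bᵀ * X) + Fintype.card n := by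
  have hXB : trace (Xᵀ * B) = trace (Bᵀ * X) := by
    rw [← trace_transpose, transpose_mul, transpose_transpose]
  simp only [transpose_sub, Matrix.sub_mul, Matrix.mul_sub, trace_sub, hB, trace_one, hXB]
  ring

section SVD

variable [Fintype n] [DecidableEq n] {W : Matrix m n ℝ} {V : Matrix n n ℝ} {σ : n → ℝ}

theorem trace_transpose_mul_svd_le {A : Matrix m n ℝ} (hA : Aᵀ * A = 1) (hW : Wᵀ * W = 1)
    (hV : Vᵀ * V = 1) (hσ : ∀ i, 0 ≤ σ i) :
    trace (Aᵀ * (W * diagonal σ * Vᵀ)) ≤ ∑ i, σ i := by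
  have hcyc : trace (Aᵀ * (W * diagonal σ * Vᵀ)) = trace ((A * V)ᵀ * W * diagonal σ) := by
    rw [← Matrix.mul_assoc, trace_mul_comm, transpose_mul]
    simp only [Matrix.mul_assoc]
  rw [hcyc]
  exact trace_mul_diagonal_le_sum
    (fun i => transpose_mul_apply_le_one (transpose_mul_self_mul_eq_one hA hV) hW i i) hσ

theorem trace_transpose_mul_svd_self (hW : Wᵀ * W = 1) (hV : Vᵀ * V = 1) :
    trace ((W * Vᵀ)ᵀ * (W * diagonal σ * Vᵀ)) = ∑ i, σ i := by
  rw [transpose_mul, transpose_transpose, trace_mul_comm]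
  simp only [← Matrix.mul_assoc]
  rw [Matrix.mul_assoc _ Vᵀ V, hV, Matrix.mul_one, trace_mul_comm, ← Matrix.mul_assoc, hW,
    Matrix.one_mul, trace_diagonal]

end SVD

end Matrix

theorem frobNorm_sub_le_frobNorm_sub {n p : ℕ} {X B C : Matrix (Fin n) (Fin p) ℝ}
    (hB : Bᵀ * B = 1) (hC : Cᵀ * C = 1) (h : trace (Cᵀ * X) ≤ trace (Bᵀ * X)) :
    frobNorm (X - B) ≤ frobNorm (X - C) := by
  unfold frobNorm
  apply Real.sqrt_le_sqrt
  rw [trace_sub_transpose_mul_sub hB, trace_sub_transpose_mul_sub hC]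
  linarith

theorem projection_is_minimizer_general {n p : ℕ}
    (X : Matrix (Fin n) (Fin p) ℝ)
    (U : Matrix (Fin n) (Fin n) ℝ) (V : Matrix (Fin p) (Fin p) ℝ)
    (S : Matrix (Fin n) (Fin p) ℝ)
    (hU : Uᵀ * U = 1) (hV : Vᵀ * V = 1)
    (σ : Fin p → ℝ) (hσpos : ∀ i, 0 < σ i)
    (hS : ∀ i j, S i j = if (i : ℕ) = (j : ℕ) then σ j else 0)
    (hSVD : X = U * S * Vᵀ)
    (Inp : Matrix (Fin n) (Fin p) ℝ)
    (hInp : ∀ i j, Inp i j = if (i : ℕ) = (j : ℕ) then 1 else 0)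
    (Q : Matrix (Fin n) (Fin p) ℝ) (hQ : Qᵀ * Q = 1) :
    frobNorm (X - U * Inp * Vᵀ) ≤ frobNorm (X - Q) := by
  have hpn : p ≤ n := by simpa using card_le_card_of_transpose_mul_self_eq_one hQ
  have hInp_eq : Inp = (1 : Matrix (Fin n) (Fin n) ℝ).submatrix id (Fin.castLE hpn) := by
    ext i j; simp [hInp, one_apply, Fin.ext_iff]
  have hS_eq : S = Inp * diagonal σ := by
    ext i j; simp [hS, hInp, mul_diagonal]
  have hW : (U * Inp)ᵀ * (U * Inp) = 1 := transpose_mul_self_mul_eq_one hU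
    (hInp_eq ▸ transpose_mul_self_submatrix_one (Fin.castLE_injective hpn))
  have hVt : (Vᵀ)ᵀ * Vᵀ = 1 := by rw [transpose_transpose]; exact mul_eq_one_comm.mp hV
  have hX : X = U * Inp * diagonal σ * Vᵀ := by rw [hSVD, hS_eq]; simp only [Matrix.mul_assoc]
  refine frobNorm_sub_le_frobNorm_sub (transpose_mul_self_mul_eq_one hW hVt) hQ ?_
  rw [hX, trace_transpose_mul_svd_self hW hV]
  exact trace_transpose_mul_svd_le hQ hW hV fun i => (hσpos i).le

theorem projection_is_minimizer {n p : ℕ}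
    (X : Matrix (Fin n) (Fin p) ℝ) (hrank : X.rank = p)
    (U : Matrix (Fin n) (Fin n) ℝ) (V : Matrix (Fin p) (Fin p) ℝ)
    (S : Matrix (Fin n) (Fin p) ℝ)
    (hU : Uᵀ * U = 1) (hV : Vᵀ * V = 1)
    (σ : Fin p → ℝ) (hσpos : ∀ i, 0 < σ i)
    (hσmono : ∀ i j : Fin p, i ≤ j → σ j ≤ σ i)
    (hS : ∀ i j, S i j = if (i : ℕ) = (j : ℕ) then σ j else 0)
    (hSVD : X = U * S * Vᵀ)
    (Inp : Matrix (Fin n) (Fin p) ℝ)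
    (hInp : ∀ i j, Inp i j = if (i : ℕ) = (j : ℕ) then 1 else 0)
    (Q : Matrix (Fin n) (Fin p) ℝ) (hQ : Qᵀ * Q = 1) :
    frobNorm (X - U * Inp * Vᵀ) ≤ frobNorm (X - Q) :=
  projection_is_minimizer_general X U V S hU hV σ hσpos hS hSVD Inp hInp Q hQ
end
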